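/- There exist a semigroup and nets for which the product density formula fails without identities: in (ℕ,+) with nets E_n = {1} and F_n = {2} for all n, one has d*_E({2}) = d*_F({2}) = 1, but d*_{E*F}({(2,2)}) = 0. -/

import Mathlib

open scoped Classical

/-- Additive translate `F + s` by an element of `S ∪ {0-shift omitted}`
(`none` meaning "no shift"). -/
def netShiftAdd {S : Type*} [Add S] (F : Set S) : Option S → Set S
  | none => F
  | some t => (· + t) '' F

/-- Upper Banach density (additive notation) of `A ⊆ S` with respect to a net of
finite nonempty subsets of `S`. -/
noncomputable def uBDAdd {S : Type*} [Add S] {I : Type*} [Preorder I]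
    (F : I → Set S) (A : Set S) : ℝ :=
  sSup {α : ℝ | ∀ i₀ : I, ∃ i, i₀ ≤ i ∧ ∃ s : Option S,
    α * ((F i).ncard : ℝ) ≤ ((A ∩ netShiftAdd (F i) s).ncard : ℝ)}

/-!
For a constant singleton net `{x}` the only windows are `{x}` and its translates `{x + t}`, so
the density of `A` is `1` if one of these points lies in `A` and `0` otherwise. Thus `{2}` has
density `1` for `{1}` (as `2 = 1 + 1`) and for `{2}`. The product net is the constant singleton
`{(1, 2)}`, and without an identity every proper translate `(1, 2) + t` has second coordinate
`> 2`, so no window meets `{(2, 2)}`.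
-/

section ConstantNet

variable {S : Type*} [Add S] {I : Type*} [Preorder I]

theorem netShiftAdd_singleton (x : S) (s : Option S) :
    netShiftAdd {x} s = {s.elim x (x + ·)} := by
  cases s <;> simp [netShiftAdd]

theorem uBDAdd_const [Nonempty I] (F : Set S) (A : Set S) :
    uBDAdd (fun _ : I => F) A =
      sSup {α : ℝ | ∃ s : Option S, α * (F.ncard : ℝ) ≤ ((A ∩ netShiftAdd F s).ncard : ℝ)} := by
  unfold uBDAdd
  congr 1
  ext α
  refine ⟨fun h => ?_, fun h i₀ => ⟨i₀, le_rfl, h⟩⟩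
  obtain ⟨_, _, hs⟩ := h (Classical.arbitrary I)
  exact hs

theorem uBDAdd_const_singleton [Nonempty I] (x : S) (A : Set S) :
    uBDAdd (fun _ : I => ({x} : Set S)) A = if x ∈ A ∨ ∃ t, x + t ∈ A then 1 else 0 := by
  have hcard : ∀ s : Option S, ((A ∩ netShiftAdd {x} s).ncard : ℝ) =
      if s.elim x (x + ·) ∈ A then 1 else 0 := by
    intro s
    rw [netShiftAdd_singleton]
    split_ifs with h
    · simp [Set.inter_eq_right.mpr (Set.singleton_subset_iff.mpr h)]
    · simp [Set.inter_singleton_eq_empty.mpr h]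
  rw [uBDAdd_const]
  simp only [Set.ncard_singleton, Nat.cast_one, mul_one, hcard]
  split_ifs with hx
  · obtain ⟨s, hs⟩ : ∃ s : Option S, s.elim x (x + ·) ∈ A := by
      rcases hx with h | ⟨t, h⟩
      exacts [⟨none, h⟩, ⟨some t, h⟩]
    refine IsGreatest.csSup_eq ⟨⟨s, by rw [if_pos hs]⟩, ?_⟩
    rintro α ⟨s', hs'⟩
    exact hs'.trans (by split_ifs <;> norm_num)
  · have hnot : ∀ s : Option S, s.elim x (x + ·) ∉ A := by
      rintro (_ | t) h
      exacts [hx (Or.inl h), hx (Or.inr ⟨t, h⟩)]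
    simp only [hnot, if_false]
    exact IsGreatest.csSup_eq ⟨⟨none, le_rfl⟩, fun α ⟨_, h⟩ => h⟩

end ConstantNet

theorem product_density_fails_without_identity :
    uBDAdd (fun _ : ℕ => ({1} : Set ℕ+)) ({2} : Set ℕ+) = 1 ∧
    uBDAdd (fun _ : ℕ => ({2} : Set ℕ+)) ({2} : Set ℕ+) = 1 ∧
    uBDAdd (fun _ : ℕ × ℕ => (({1} : Set ℕ+) ×ˢ ({2} : Set ℕ+)))
      ({((2 : ℕ+), (2 : ℕ+))} : Set (ℕ+ × ℕ+)) = 0 := by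
  refine ⟨?_, ?_, ?_⟩
  · rw [uBDAdd_const_singleton, if_pos (Or.inr ⟨1, rfl⟩)]
  · rw [uBDAdd_const_singleton, if_pos (Or.inl (Set.mem_singleton 2))]
  · simp only [Set.singleton_prod_singleton]
    rw [uBDAdd_const_singleton, if_neg]
    rintro (h | ⟨t, h⟩)
    · exact absurd (congrArg Prod.fst (Set.mem_singleton_iff.mp h)) (by decide)
    · exact (PNat.lt_add_right 2 t.2).ne' (congrArg Prod.snd (Set.mem_singleton_iff.mp h))
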